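/- (Reverse Strategy Preservation for safety) Let G be a MAGIIAN and G^K its MKBSC expansion (with no PDK assumption). Let F be an observable safety objective in G and F^K its translation for G^K. If there is a winning profile of observation-based perfect-recall strategies in G^K for F^K, then there is also a winning profile of observation-based perfect-recall strategies in G for F. -/
import Mathlib


open Set

/-- A multi-agent game with imperfect information against Nature (MAGIIAN).
`obs i l` is the observation block of agent `i` containing location `l`;
the axioms make the blocks of each agent a partition of the locations. -/
structure MAGIIAN (Agt Loc : Type) (Act : Agt → Type) where
  init : Loc
  trans : Loc → (∀ i, Act i) → Loc → Prop
  obs : Agt → Loc → Set Loc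
  obs_mem : ∀ i l, l ∈ obs i l
  obs_eq : ∀ i l l', l' ∈ obs i l → obs i l' = obs i l

namespace MAGIIAN

variable {Agt Loc : Type} {Act : Agt → Type}

/-- `o` is an observation (block) of agent `i` in `G`. -/
def IsObs (G : MAGIIAN Agt Loc Act) (i : Agt) (o : Set Loc) : Prop :=
  ∃ l, o = G.obs i l

/-- Transition relation `Δ_i` of the projection `G|_i`. -/
def projTrans (G : MAGIIAN Agt Loc Act) (i : Agt) (l : Loc) (a : Act i) (l' : Loc) : Prop :=
  ∃ σ : ∀ j, Act j, σ i = a ∧ G.trans l σ l'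

/-- Transition relation `Δ^K_i` of the individual KBSC expansion `(G|_i)^K`. -/
def kTrans (G : MAGIIAN Agt Loc Act) (i : Agt) (s : Set Loc) (a : Act i) (s' : Set Loc) : Prop :=
  ∃ o : Set Loc, G.IsObs i o ∧ s' = {l' ∈ o | ∃ l ∈ s, G.projTrans i l a l'} ∧ s'.Nonempty

/-- Pruned joint transition relation `Δ^K` of the MKBSC expansion `G^K`
(unrealisable transitions are removed). -/
def kTransJ (G : MAGIIAN Agt Loc Act) (s : Agt → Set Loc) (σ : ∀ i, Act i)
    (s' : Agt → Set Loc) : Prop :=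
  (∀ i, G.kTrans i (s i) (σ i) (s' i)) ∧
    ∃ l ∈ (⋂ i, s i), ∃ l' ∈ (⋂ i, s' i), G.trans l σ l'

/-- The MKBSC expansion `G^K`, as a MAGIIAN over joint knowledge states;
agent `i`'s observation of a joint knowledge state is determined by its `i`-th component. -/
def expand (G : MAGIIAN Agt Loc Act) : MAGIIAN Agt (Agt → Set Loc) Act where
  init := fun _ => {G.init}
  trans := G.kTransJ
  obs := fun i s => {s' | s' i = s i}
  obs_mem := fun _ _ => rfl
  obs_eq := by
    intro i s s' h
    simp only [Set.mem_setOf_eq] at h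
    ext t
    simp [Set.mem_setOf_eq, h]

/-- Reachability from the initial location. -/
def Reachable (G : MAGIIAN Agt Loc Act) (l : Loc) : Prop :=
  Relation.ReflTransGen (fun x y => ∃ σ, G.trans x σ y) G.init l

/-- The MKBSC expansion `G^K` fulfills the perfect-distributed-knowledge (PDK) condition:
every reachable joint knowledge state has singleton component intersection. -/
def PDK (G : MAGIIAN Agt Loc Act) : Prop :=
  ∀ s : Agt → Set Loc, G.expand.Reachable s → ∃ l : Loc, (⋂ i, s i) = {l}

/-- A full play, given as its sequences of locations and of joint actions. -/
def IsPlay (G : MAGIIAN Agt Loc Act) (l : ℕ → Loc) (σ : ℕ → ∀ i, Act i) : Prop :=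
  l 0 = G.init ∧ ∀ k, G.trans (l k) (σ k) (l (k + 1))

/-- Observation history of agent `i` (list of observation blocks) up to time `k`. -/
def obsHist (G : MAGIIAN Agt Loc Act) (i : Agt) (l : ℕ → Loc) (k : ℕ) : List (Set Loc) :=
  (List.range (k + 1)).map fun j => G.obs i (l j)

/-- Outcomes (location sequences) of a profile of observation-based
perfect-recall strategies. -/
def PROutcome (G : MAGIIAN Agt Loc Act) (α : ∀ i, List (Set Loc) → Act i)
    (l : ℕ → Loc) : Prop :=
  ∃ σ : ℕ → ∀ i, Act i, G.IsPlay l σ ∧ ∀ k i, σ k i = α i (G.obsHist i l k)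

/-- Outcomes of a profile of observation-based memoryless strategies. -/
def MLOutcome (G : MAGIIAN Agt Loc Act) (α : ∀ i, Set Loc → Act i) (l : ℕ → Loc) : Prop :=
  ∃ σ : ℕ → ∀ i, Act i, G.IsPlay l σ ∧ ∀ k i, σ k i = α i (G.obs i (l k))

/-- A play is winning for an observable reachability objective `R` iff some
agent at some point observes an observation in `R`. -/
def WinsReach (G : MAGIIAN Agt Loc Act) (R : Set (Set Loc)) (l : ℕ → Loc) : Prop :=
  ∃ i k, G.obs i (l k) ∈ R

/-- A play is winning for an observable safety objective `F` iff at every point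
some agent observes an observation in `F`. -/
def WinsSafe (G : MAGIIAN Agt Loc Act) (F : Set (Set Loc)) (l : ℕ → Loc) : Prop :=
  ∀ k, ∃ i, G.obs i (l k) ∈ F

/-- `ob_i`: maps an observation block of `G^K` for agent `i` (all of whose members have the
same `i`-th component `A`) to the unique observation of `i` in `G` that includes `A`. -/
def obMap (G : MAGIIAN Agt Loc Act) (i : Agt) (O : Set (Agt → Set Loc)) : Set Loc :=
  ⋃ s ∈ O, ⋃ l ∈ s i, G.obs i l

/-- The translated objective `R^K = {s ∈ S : ∃ i, ∃ o ∈ R ∩ Obs_i, s i ⊆ o}`,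
as a set of joint knowledge states. -/
def transObj (G : MAGIIAN Agt Loc Act) (R : Set (Set Loc)) : Set (Agt → Set Loc) :=
  {s | ∃ i, ∃ o ∈ R, G.IsObs i o ∧ s i ⊆ o}

end MAGIIAN


namespace MAGIIAN

variable {Agt Loc : Type} {Act : Agt → Type}

/-- The `G^K` observation block of agent `i` corresponding to knowledge state `s`. -/
def blk (i : Agt) (s : Set Loc) : Set (Agt → Set Loc) := {t | t i = s}

/-- Knowledge-state update. -/
def upd (G : MAGIIAN Agt Loc Act) (i : Agt) (s : Set Loc) (a : Act i) (o : Set Loc) :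
    Set Loc := {l' ∈ o | ∃ l ∈ s, G.projTrans i l a l'}

/-- From a reversed (newest first) observation history of agent `i` in `G`, compute the
reversed list of knowledge states of agent `i`. -/
def kaux (G : MAGIIAN Agt Loc Act) (αK : ∀ i, List (Set (Agt → Set Loc)) → Act i) (i : Agt) :
    List (Set Loc) → List (Set Loc)
  | [] => []
  | o :: rest =>
    match kaux G αK i rest with
    | [] => [{G.init}]
    | s :: ss => upd G i s (αK i (((s :: ss).reverse).map (blk i))) o :: s :: ss

/-- The pulled-back strategy for agent `i` in `G`. -/
def strat (G : MAGIIAN Agt Loc Act) (αK : ∀ i, List (Set (Agt → Set Loc)) → Act i) (i : Agt)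
    (h : List (Set Loc)) : Act i :=
  αK i (((kaux G αK i h.reverse).reverse).map (blk i))

/-- Knowledge states along a concrete play. -/
def kstates (G : MAGIIAN Agt Loc Act) (l : ℕ → Loc) (σ : ℕ → ∀ i, Act i) (i : Agt) :
    ℕ → Set Loc
  | 0 => {G.init}
  | k + 1 => upd G i (kstates G l σ i k) (σ k i) (G.obs i (l (k + 1)))

lemma obsHist_succ (G : MAGIIAN Agt Loc Act) (i : Agt) (l : ℕ → Loc) (k : ℕ) :
    G.obsHist i l (k + 1) = G.obsHist i l k ++ [G.obs i (l (k + 1))] := by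
  simp [obsHist, List.range_succ]

lemma mem_kstates (G : MAGIIAN Agt Loc Act) {l : ℕ → Loc} {σ : ℕ → ∀ i, Act i}
    (hp : G.IsPlay l σ) (i : Agt) : ∀ k, l k ∈ kstates G l σ i k
  | 0 => by simp [kstates, hp.1]
  | k + 1 => by
    refine ⟨G.obs_mem i _, l k, mem_kstates G hp i k, σ k, rfl, hp.2 k⟩

lemma kaux_cons (G : MAGIIAN Agt Loc Act) (αK : ∀ i, List (Set (Agt → Set Loc)) → Act i)
    (i : Agt) (o : Set Loc) (rest : List (Set Loc)) (s : Set Loc) (ss : List (Set Loc))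
    (h : kaux G αK i rest = s :: ss) :
    kaux G αK i (o :: rest)
      = upd G i s (αK i (((s :: ss).reverse).map (blk i))) o :: s :: ss := by
  rw [kaux, h]

lemma kaux_obsHist (G : MAGIIAN Agt Loc Act) (αK : ∀ i, List (Set (Agt → Set Loc)) → Act i)
    {l : ℕ → Loc} {σ : ℕ → ∀ i, Act i} (i : Agt)
    (hc : ∀ j, σ j i = strat G αK i (G.obsHist i l j)) :
    ∀ k, kaux G αK i (G.obsHist i l k).reverse
      = ((List.range (k + 1)).reverse).map (kstates G l σ i)
  | 0 => by simp [obsHist, kaux, kstates, List.range_succ]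
  | k + 1 => by
    have IH := kaux_obsHist G αK i hc k
    have hr : (List.range (k + 1)).reverse.map (kstates G l σ i)
        = kstates G l σ i k :: (List.range k).reverse.map (kstates G l σ i) := by
      simp [List.range_succ]
    rw [obsHist_succ, List.reverse_append]
    simp only [List.reverse_cons, List.reverse_nil, List.nil_append, List.singleton_append]
    rw [kaux_cons G αK i _ _ _ _ (IH.trans hr)]
    have hact : αK i ((kstates G l σ i k :: (List.range k).reverse.map (kstates G l σ i)).reverse.map
        (blk i)) = σ k i := by
      rw [hc k, strat, IH, hr]
    rw [hact]
    have : (List.range (k + 1 + 1)).reverse.map (kstates G l σ i)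
        = kstates G l σ i (k + 1) :: (List.range (k + 1)).reverse.map (kstates G l σ i) := by
      simp [List.range_succ]
    rw [this, hr, kstates]

/-- Reverse Strategy Preservation for safety: if there is a winning profile of
observation-based perfect-recall strategies in `G^K` for the translated observable
safety objective `F^K`, then there is also one in `G` for `F` (no PDK assumption). -/
theorem reverse_strategy_preservation_safe (G : MAGIIAN Agt Loc Act)
    (F : Set (Set Loc)) (hF : ∀ o ∈ F, ∃ i, G.IsObs i o)
    (h : ∃ αK : ∀ i, List (Set (Agt → Set Loc)) → Act i,
      ∀ s : ℕ → Agt → Set Loc, G.expand.PROutcome αK s → ∀ k, s k ∈ G.transObj F) :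
    ∃ α : ∀ i, List (Set Loc) → Act i, ∀ l, G.PROutcome α l → G.WinsSafe F l := by
  obtain ⟨αK, hwin⟩ := h
  refine ⟨strat G αK, ?_⟩
  rintro l ⟨σ, hp, hc⟩ k
  -- the joint knowledge-state play
  set sK : ℕ → Agt → Set Loc := fun k i => kstates G l σ i k with hsK
  have hmem : ∀ k i, l k ∈ sK k i := fun k i => mem_kstates G hp i k
  have hK : ∀ i k, αK i (G.expand.obsHist i sK k) = σ k i := by
    intro i k
    have := kaux_obsHist G αK i (fun j => hc j i) k
    have hh : G.expand.obsHist i sK k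
        = ((kaux G αK i (G.obsHist i l k).reverse).reverse).map (blk i) := by
      rw [this]
      simp only [List.map_reverse, List.reverse_reverse, List.map_map]
      rfl
    rw [hh]; exact (hc k i).symm
  -- sK is a PROutcome of αK in the expansion
  have hout : G.expand.PROutcome αK sK := by
    refine ⟨σ, ⟨?_, ?_⟩, fun k i => (hK i k).symm⟩
    · funext i; rfl
    · intro j
      refine ⟨fun i => ?_, l j, Set.mem_iInter.2 fun i => hmem j i,
        l (j + 1), Set.mem_iInter.2 fun i => hmem (j + 1) i, hp.2 j⟩
      exact ⟨G.obs i (l (j + 1)), ⟨l (j + 1), rfl⟩, rfl,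
        ⟨l (j + 1), hmem (j + 1) i⟩⟩
  obtain ⟨i, o, hoF, ⟨m, hm⟩, hsub⟩ := hwin sK hout k
  refine ⟨i, ?_⟩
  have : l k ∈ o := hsub (hmem k i)
  rw [show G.obs i (l k) = o from by rw [hm] at this ⊢; exact G.obs_eq i m (l k) this]
  exact hoF

end MAGIIAN
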